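/- arXiv:1208.0889 — 5 statements merged into one kernel-verified Lean document; each statement's English description precedes it below -/
import Mathlib

section
/- The map sending a proper Young wall Y of type A^{(2)}_{2ℓ} with no removable δ to the sequence (λ₁(Y), λ₂(Y), ...) of numbers of stacked blocks in its columns is a bijection between the set 𝒴(Λ₀) of such Young walls and the set of h-restricted h-strict partitions, where h = 2ℓ+1. -/
/-!
Statement 3: the map sending a proper Young wall of type `A^{(2)}_{2ℓ}` with no
removable `δ` to its sequence of column heights (numbers of stacked blocks) is a
bijection onto the set of `h`-restricted `h`-strict partitions, `h = 2ℓ+1`.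

A Young wall is encoded by the sequence `c : ℕ → ℕ` of the numbers of blocks
stacked in its columns (left to right): the stacking pattern in each column is
forced, so a wall is determined by these numbers; the stacking rules say exactly
that `c` is weakly decreasing and eventually zero.  A column is full iff its
number of blocks is not divisible by `h`; a wall is proper iff no two full
columns have the same height; a removable `δ` means that `h` blocks (a
`δ`-column) can be removed from some column so that the result is again a
proper Young wall.
-/

namespace YoungWalls

/-- `c` is (the sequence of column heights of) a Young wall: weakly decreasing
and eventually zero. -/
def IsWall (c : ℕ → ℕ) : Prop :=
  (∀ k, c (k + 1) ≤ c k) ∧ ∃ N, ∀ k, N ≤ k → c k = 0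

/-- A wall is proper if no two of its full columns (those whose number of
blocks is not divisible by `h`) have equal height. -/
def Proper (h : ℕ) (c : ℕ → ℕ) : Prop :=
  ∀ j k : ℕ, j ≠ k → ¬ h ∣ c j → ¬ h ∣ c k → c j ≠ c k

/-- Removing a `δ`-column (`h` blocks) from the `k`-th column. -/
def removeDelta (h : ℕ) (c : ℕ → ℕ) (k : ℕ) : ℕ → ℕ :=
  Function.update c k (c k - h)

/-- The wall `c` contains a removable `δ`. -/
def HasRemovableDelta (h : ℕ) (c : ℕ → ℕ) : Prop :=
  ∃ k, h ≤ c k ∧ IsWall (removeDelta h c k) ∧ Proper h (removeDelta h c k)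

/-- An `h`-strict partition: `h ∣ λ_r` whenever `λ_r = λ_{r+1}`. -/
def HStrict (h : ℕ) (c : ℕ → ℕ) : Prop := ∀ r, c r = c (r + 1) → h ∣ c r

/-- An `h`-restricted partition: `λ_r − λ_{r+1} < h` if `h ∣ λ_r`, and
`λ_r − λ_{r+1} ≤ h` if `h ∤ λ_r`. -/
def HRestricted (h : ℕ) (c : ℕ → ℕ) : Prop :=
  ∀ r, (h ∣ c r → c r - c (r + 1) < h) ∧ (¬ h ∣ c r → c r - c (r + 1) ≤ h)

private lemma wall_mono {c : ℕ → ℕ} (hc : ∀ k, c (k + 1) ≤ c k) :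
    ∀ {j k : ℕ}, j ≤ k → c k ≤ c j := by
  intro j k h
  obtain ⟨d, rfl⟩ := Nat.exists_eq_add_of_le h
  induction d with
  | zero => simp
  | succ d ih => exact le_trans (hc (j + d)) (ih (by omega))

private lemma rd_self (h : ℕ) (c : ℕ → ℕ) (r : ℕ) : removeDelta h c r r = c r - h :=
  by unfold removeDelta; rw [Function.update_self]

private lemma rd_other (h : ℕ) (c : ℕ → ℕ) {r j : ℕ} (hne : j ≠ r) :
    removeDelta h c r j = c j :=
  by unfold removeDelta; rw [Function.update_of_ne hne]

private lemma removeDelta_isWall {h : ℕ} {c : ℕ → ℕ} (W : IsWall c) {r : ℕ}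
    (hr : c (r + 1) + h ≤ c r) : IsWall (removeDelta h c r) := by
  obtain ⟨hc, N, hN⟩ := W
  constructor
  · intro k
    by_cases h1 : k = r
    · subst h1
      rw [rd_self, rd_other h c (by omega : k + 1 ≠ k)]
      omega
    · rw [rd_other h c h1]
      by_cases h2 : k + 1 = r
      · rw [h2, rd_self]
        have := hc k
        rw [h2] at this
        omega
      · rw [rd_other h c h2]; exact hc k
  · refine ⟨N + r + 1, fun k hk => ?_⟩
    rw [rd_other h c (by omega : k ≠ r)]
    exact hN k (by omega)

/-- The set `𝒴(Λ₀)` of proper Young walls with no removable `δ` coincides,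
via `Y ↦ (λ₁(Y), λ₂(Y), …)`, with the set of `h`-restricted `h`-strict
partitions. -/
theorem youngWall_bijection (ℓ : ℕ) (hℓ : 1 ≤ ℓ) :
    Set.BijOn id
      {c : ℕ → ℕ | IsWall c ∧ Proper (2 * ℓ + 1) c ∧ ¬ HasRemovableDelta (2 * ℓ + 1) c}
      {c : ℕ → ℕ | IsWall c ∧ HStrict (2 * ℓ + 1) c ∧ HRestricted (2 * ℓ + 1) c} := by
  set h := 2 * ℓ + 1 with hh
  have hpos : 0 < h := by omega
  have hset :
      {c : ℕ → ℕ | IsWall c ∧ Proper h c ∧ ¬ HasRemovableDelta h c} =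
      {c : ℕ → ℕ | IsWall c ∧ HStrict h c ∧ HRestricted h c} := by
    ext c
    simp only [Set.mem_setOf_eq]
    constructor
    · rintro ⟨W, P, ND⟩
      have hc := W.1
      refine ⟨W, ?_, ?_⟩
      · -- HStrict from Proper
        intro r hr
        by_contra hd
        exact P r (r + 1) (by omega) hd (hr ▸ hd) hr
      · -- HRestricted from no removable δ
        intro r
        constructor
        · intro hd
          by_contra hlt
          push_neg at hlt
          have hr : c (r + 1) + h ≤ c r := by have := hc r; omega
          refine ND ⟨r, by omega, removeDelta_isWall W hr, ?_⟩
          intro j k hjk hj hk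
          by_cases h1 : j = r
          · exfalso; apply hj; rw [h1, rd_self]
            exact Nat.dvd_sub (h1 ▸ hd) dvd_rfl
          · by_cases h2 : k = r
            · exfalso; apply hk; rw [h2, rd_self]
              exact Nat.dvd_sub (h2 ▸ hd) dvd_rfl
            · rw [rd_other h c h1] at hj ⊢
              rw [rd_other h c h2] at hk ⊢
              exact P j k hjk hj hk
        · intro hnd
          by_contra hlt
          push_neg at hlt
          have hr : c (r + 1) + h + 1 ≤ c r := by have := hc r; omega
          refine ND ⟨r, by omega, removeDelta_isWall W (by omega), ?_⟩
          intro j k hjk hj hk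
          by_cases h1 : j = r
          · subst h1
            rw [rd_self]
            rw [rd_other h c (by omega : k ≠ j)] at hk ⊢
            rcases lt_or_gt_of_ne (by omega : k ≠ j) with hkj | hkj
            · have : c j ≤ c k := wall_mono hc (by omega)
              omega
            · have : c k ≤ c (j + 1) := wall_mono hc (by omega)
              omega
          · rw [rd_other h c h1] at hj ⊢
            by_cases h2 : k = r
            · subst h2
              rw [rd_self]
              rcases lt_or_gt_of_ne (by omega : j ≠ k) with hkj | hkj
              · have : c k ≤ c j := wall_mono hc (by omega)
                omega
              · have : c j ≤ c (k + 1) := wall_mono hc (by omega)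
                omega
            · rw [rd_other h c h2] at hk ⊢
              exact P j k hjk hj hk
    · rintro ⟨W, S, R⟩
      have hc := W.1
      have P : Proper h c := by
        intro j k hjk hj hk hEq
        rcases lt_or_gt_of_ne hjk with hlt | hlt
        · have h1 : c (j + 1) ≤ c j := hc j
          have h2 : c k ≤ c (j + 1) := wall_mono hc (by omega)
          exact hj (S j (by omega))
        · have h1 : c (k + 1) ≤ c k := hc k
          have h2 : c j ≤ c (k + 1) := wall_mono hc (by omega)
          exact hk (S k (by omega))
      refine ⟨W, P, ?_⟩
      rintro ⟨k, hk, W', P'⟩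
      have hstep := W'.1 k
      rw [rd_self, rd_other h c (by omega : k + 1 ≠ k)] at hstep
      -- hstep : c (k+1) ≤ c k - h
      by_cases hd : h ∣ c k
      · have := (R k).1 hd
        omega
      · have hle := (R k).2 hd
        have heq : c (k + 1) = c k - h := by omega
        have hnd' : ¬ h ∣ c k - h := by
          intro hdd
          exact hd (by have hck : c k = (c k - h) + h := by omega
                       rw [hck]; exact Nat.dvd_add hdd dvd_rfl)
        refine P' k (k + 1) (by omega) ?_ ?_ ?_
        · rw [rd_self]; exact hnd'
        · rw [rd_other h c (by omega : k + 1 ≠ k), heq]; exact hnd'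
        · rw [rd_self, rd_other h c (by omega : k + 1 ≠ k), heq]
  rw [hset]
  exact Set.bijOn_id _


end YoungWalls
end

section
/- Let 𝖢 be the Clifford algebra over ℂ generated by φ_k (k ∈ ℤ) with relations φ_p φ_q + φ_q φ_p = 2 if p = q = 0 and φ_p φ_q + φ_q φ_p = (−1)^p δ_{p,−q} otherwise. Define e_j = (−1)^j φ_{−j−1} φ_j for j ≥ 1, e_0 = φ_{−1}φ_0, f_j = (−1)^j φ_{j+1} φ_{−j} for j ≥ 1, f_0 = φ_1 φ_0, h_0 = 2φ_1φ_{−1}+1, and h_j = (−1)^j(φ_jφ_{−j} + φ_{j+1}φ_{−j−1}) for j ≥ 1. Then [e_i, f_j] = δ_{ij} h_i for all i, j ≥ 0 (in the algebra 𝖢). -/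
/-!
Statement 4: in the Clifford algebra `𝖢` of neutral fermions (generators
`φ_k`, `k ∈ ℤ`, with `φ_pφ_q + φ_qφ_p = 2` if `p = q = 0` and
`= (−1)^p δ_{p,−q}` otherwise), the elements
`e_0 = φ_{-1}φ_0`, `e_j = (−1)^j φ_{−j−1}φ_j`,
`f_0 = φ_1φ_0`, `f_j = (−1)^j φ_{j+1}φ_{−j}`,
`h_0 = 2φ_1φ_{−1} + 1`, `h_j = (−1)^j (φ_jφ_{−j} + φ_{j+1}φ_{−j−1})` (`j ≥ 1`)
satisfy `[e_i, f_j] = δ_{ij} h_i`.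
-/

namespace NeutralFermions

noncomputable section

/-- The defining relations of the Clifford algebra of neutral fermions. -/
inductive CRel : FreeAlgebra ℂ ℤ → FreeAlgebra ℂ ℤ → Prop
  | clifford (p q : ℤ) :
      CRel (FreeAlgebra.ι ℂ p * FreeAlgebra.ι ℂ q + FreeAlgebra.ι ℂ q * FreeAlgebra.ι ℂ p)
        (algebraMap ℂ (FreeAlgebra ℂ ℤ)
          (if p = 0 ∧ q = 0 then 2 else if q = -p then (-1 : ℂ) ^ p else 0))

/-- The Clifford algebra `𝖢` of neutral fermions. -/
abbrev Cl : Type := RingQuot CRel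

/-- The generator `φ_k`. -/
def φ (k : ℤ) : Cl := RingQuot.mkAlgHom ℂ CRel (FreeAlgebra.ι ℂ k)

/-- The Chevalley generator `𝖾_j` of `𝔤(B_∞)`. -/
def eC (j : ℕ) : Cl :=
  if j = 0 then φ (-1) * φ 0
  else ((-1 : ℂ) ^ j) • (φ (-(j : ℤ) - 1) * φ (j : ℤ))

/-- The Chevalley generator `𝖿_j` of `𝔤(B_∞)`. -/
def fC (j : ℕ) : Cl :=
  if j = 0 then φ 1 * φ 0
  else ((-1 : ℂ) ^ j) • (φ ((j : ℤ) + 1) * φ (-(j : ℤ)))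

/-- The Cartan element `𝗁_j` of `𝔤(B_∞)`. -/
def hC (j : ℕ) : Cl :=
  if j = 0 then 2 • (φ 1 * φ (-1)) + 1
  else ((-1 : ℂ) ^ j) • (φ (j : ℤ) * φ (-(j : ℤ)) + φ ((j : ℤ) + 1) * φ (-(j : ℤ) - 1))

lemma quad {R : Type*} [Ring R] (a b c d z1 z2 z3 z4 : R)
    (hz1 : ∀ x, x * z1 = z1 * x) (hz3 : ∀ x, x * z3 = z3 * x) (hz4 : ∀ x, x * z4 = z4 * x)
    (h1 : b*c = z1 - c*b) (h2 : a*c = z2 - c*a) (h3 : b*d = z3 - d*b) (h4 : a*d = z4 - d*a) :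
    a*b*(c*d) - c*d*(a*b) = z1*(a*d) - z2*(b*d) + z3*(c*a) - z4*(c*b) := by
  calc a*b*(c*d) - c*d*(a*b)
      = a*(b*c)*d - c*d*(a*b) := by noncomm_ring
    _ = a*(z1 - c*b)*d - c*d*(a*b) := by rw [h1]
    _ = a*z1*d - (a*c)*(b*d) - c*d*(a*b) := by noncomm_ring
    _ = a*z1*d - (z2 - c*a)*(b*d) - c*d*(a*b) := by rw [h2]
    _ = a*z1*d - z2*(b*d) + (c*a)*(b*d) - c*d*(a*b) := by noncomm_ring
    _ = a*z1*d - z2*(b*d) + (c*a)*(z3 - d*b) - c*d*(a*b) := by rw [h3]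
    _ = a*z1*d - z2*(b*d) + c*a*z3 - c*(a*d)*b - c*d*(a*b) := by noncomm_ring
    _ = a*z1*d - z2*(b*d) + c*a*z3 - c*(z4 - d*a)*b - c*d*(a*b) := by rw [h4]
    _ = a*z1*d - z2*(b*d) + c*a*z3 - c*z4*b := by noncomm_ring
    _ = z1*(a*d) - z2*(b*d) + z3*(c*a) - z4*(c*b) := by
        rw [hz1 a, hz3 (c*a), ← mul_assoc, hz4 c, mul_assoc z4, mul_assoc z1]

def ccc (p q : ℤ) : ℂ := if p = 0 ∧ q = 0 then 2 else if q = -p then (-1 : ℂ) ^ p else 0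

lemma anti (p q : ℤ) : φ p * φ q + φ q * φ p = algebraMap ℂ Cl (ccc p q) := by
  have h := RingQuot.mkAlgHom_rel ℂ (CRel.clifford p q)
  simpa [φ, map_add, map_mul, ccc, AlgHom.commutes] using h

lemma swap (p q : ℤ) : φ p * φ q = algebraMap ℂ Cl (ccc p q) - φ q * φ p :=
  eq_sub_of_add_eq (anti p q)

lemma quad_phi (p q r s : ℤ) :
    φ p * φ q * (φ r * φ s) - φ r * φ s * (φ p * φ q)
      = algebraMap ℂ Cl (ccc q r) * (φ p * φ s) - algebraMap ℂ Cl (ccc p r) * (φ q * φ s)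
        + algebraMap ℂ Cl (ccc q s) * (φ r * φ p) - algebraMap ℂ Cl (ccc p s) * (φ r * φ q) :=
  quad _ _ _ _ _ _ _ _ (fun x => (Algebra.commutes _ x).symm)
    (fun x => (Algebra.commutes _ x).symm) (fun x => (Algebra.commutes _ x).symm)
    (swap q r) (swap p r) (swap q s) (swap p s)

lemma phi0_sq : φ 0 * φ 0 = 1 := by
  have h := anti 0 0
  have h2 : ccc 0 0 = 2 := by simp [ccc]
  rw [h2] at h
  have hl : φ 0 * φ 0 + φ 0 * φ 0 = (2:ℂ) • (φ 0 * φ 0) := (two_smul ℂ _).symm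
  have hr : algebraMap ℂ Cl 2 = (2:ℂ) • (1:Cl) := by rw [Algebra.smul_def, mul_one]
  rw [hl, hr] at h
  exact smul_right_injective Cl two_ne_zero h

lemma nzp (a : ℤ) : ((-1:ℂ))^(-a) = (-1)^a := by
  rw [zpow_neg]
  refine inv_eq_of_mul_eq_one_left ?_
  rw [← zpow_add₀ (by norm_num : (-1:ℂ) ≠ 0), ← two_mul, zpow_mul]
  norm_num

lemma smul_comm_helper (r s : ℂ) (X Y : Cl) :
    (r • X) * (s • Y) - (s • Y) * (r • X) = (r*s) • (X*Y - Y*X) := by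
  simp only [smul_mul_assoc, mul_smul_comm, smul_smul, smul_sub, mul_comm s r]

lemma fin2' {A : Type*} [Ring A] [Algebra ℂ A] (t : ℂ) (ht : t * t = 1) (X Y : A) :
    (t*t) • (-(algebraMap ℂ A (-t) * X) + algebraMap ℂ A t * Y) = t • (X + Y) := by
  rw [ht, one_smul, map_neg, neg_mul, neg_neg, smul_add, Algebra.smul_def, Algebra.smul_def]

lemma fin2 (t : ℂ) (ht : t * t = 1) (X Y : Cl) :
    (t*t) • (-(algebraMap ℂ Cl (-t) * X) + algebraMap ℂ Cl t * Y) = t • (X + Y) :=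
  fin2' t ht X Y

lemma eC_eq (n : ℕ) : eC n = ((-1:ℂ)^n) • (φ (-(n:ℤ) - 1) * φ (n:ℤ)) := by
  cases n with
  | zero => simp [eC]
  | succ n => rw [eC, if_neg (Nat.succ_ne_zero n)]

lemma fC_eq (n : ℕ) : fC n = ((-1:ℂ)^n) • (φ ((n:ℤ) + 1) * φ (-(n:ℤ))) := by
  cases n with
  | zero => simp [fC]
  | succ n => rw [fC, if_neg (Nat.succ_ne_zero n)]

/-- `[𝖾_i, 𝖿_j] = δ_{ij} 𝗁_i` in the Clifford algebra `𝖢`. -/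
theorem commutator_e_f (i j : ℕ) :
    eC i * fC j - fC j * eC i = if i = j then hC i else 0 := by
  rw [eC_eq, fC_eq, smul_comm_helper, quad_phi]
  have hz1 : ccc (i:ℤ) ((j:ℤ)+1) = 0 := by
    simp only [ccc]; rw [if_neg (by omega), if_neg (by omega)]
  have hz4 : ccc (-(i:ℤ)-1) (-(j:ℤ)) = 0 := by
    simp only [ccc]; rw [if_neg (by omega), if_neg (by omega)]
  rw [hz1, hz4]
  simp only [map_zero, zero_mul, zero_sub, sub_zero]
  by_cases hij : i = j
  · subst hij
    rw [if_pos rfl]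
    have hz2 : ccc (-(i:ℤ)-1) ((i:ℤ)+1) = -((-1:ℂ)^i) := by
      simp only [ccc]; rw [if_neg (by omega), if_pos (by omega)]
      have h1 : (-(i:ℤ)-1) = -(((i+1:ℕ)):ℤ) := by push_cast; ring
      rw [h1, nzp, zpow_natCast, pow_succ]; ring
    rw [hz2]
    have ht : ((-1:ℂ)^i) * ((-1:ℂ)^i) = 1 := by
      rw [← pow_add, ← two_mul, pow_mul]; norm_num
    cases i with
    | zero =>
      have hz3 : ccc ((0:ℕ):ℤ) (-((0:ℕ):ℤ)) = 2 := by norm_num [ccc]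
      rw [hz3, hC, if_pos rfl]
      norm_num [phi0_sq]
      rw [map_ofNat]
      exact add_comm _ _
    | succ n =>
      have hz3 : ccc ((n+1:ℕ):ℤ) (-((n+1:ℕ):ℤ)) = (-1:ℂ)^(n+1:ℕ) := by
        simp only [ccc, if_true]
        rw [if_neg (by push_cast; omega)]
        exact zpow_natCast _ _
      rw [hz3, hC, if_neg (Nat.succ_ne_zero n)]
      exact fin2 _ ht _ _
  · rw [if_neg hij]
    have hz2 : ccc (-(i:ℤ)-1) ((j:ℤ)+1) = 0 := by
      simp only [ccc]; rw [if_neg (by omega), if_neg (by omega)]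
    have hz3 : ccc (i:ℤ) (-(j:ℤ)) = 0 := by
      simp only [ccc]; rw [if_neg (by omega), if_neg (by omega)]
    rw [hz2, hz3]
    simp


end

end NeutralFermions
end

section
/- In the Fock space F of neutral fermions, spanned by vectors |λ⟩ = φ_{λ₁}···φ_{λ_{2r}}|0⟩ indexed by strict partitions λ (padding with λ_{2r}=0 when the length is odd), the operators e_j and f_j act by: e_j|λ⟩ = |e_jλ⟩ if λ has a row of length j+1 and no row of length j (where e_jλ removes the last box of the length-(j+1) row), and e_j|λ⟩ = 0 otherwise; f_j|λ⟩ = |f_jλ⟩ if λ has a row of length j and no row of length j+1 (where f_jλ adds a box to the length-j row, including adding a new row of length 1 when j=0 if λ has no row of length 1), and f_j|λ⟩ = 0 otherwise. -/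
/-!
Up to sign, `𝖾_j = φ_{-j-1} φ_j` and `𝖿_j = φ_{j+1} φ_{-j}` are products of two fermions. Such a
product commutes with every `φ_m` that anticommutes with both factors, so it moves past the parts
of `λ` larger than `j + 1` and acts locally. There `φ_{-k} φ_k` acts on a monomial without `k` as
the scalar `(-1)^k`: by `φ_{-k} φ_k + φ_k φ_{-k} = (-1)^k` it remains to see that `φ_{-k}`
anticommutes to the vacuum, which it annihilates. Both operators vanish when they would create
a part already present, since `φ_k² = 0` for `k ≠ 0`, or annihilate a missing one. The padding
zero is harmless because `φ_0² = 1`, which also lets `j = 0` be treated like the other `j`.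
-/

namespace NeutralFermions

noncomputable section

/-- The left ideal `I` of `𝖢` generated by the `φ_k`, `k < 0`. -/
def negIdeal : Submodule Cl Cl :=
  Submodule.span Cl {x | ∃ k : ℤ, k < 0 ∧ x = φ k}

/-- The Fock space `F = 𝖢/I` of neutral fermions, a left `𝖢`-module. -/
abbrev Fock : Type := Cl ⧸ negIdeal

/-- The basis vector `|λ⟩ = φ_{λ₁} ⋯ φ_{λ_{2r}}|0⟩` attached to a strict
partition, given as a strictly decreasing list of positive integers, padded
with a trailing `0` when its length is odd. -/
def vac (l : List ℕ) : Fock :=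
  Submodule.Quotient.mk
    (((if Even l.length then l else l ++ [0]).map (fun m => φ (m : ℤ))).prod)

/-- `𝖾_jλ`: replace the row of length `j+1` by one of length `j`
(deleting it if `j = 0`). -/
def eStep (j : ℕ) (l : List ℕ) : List ℕ :=
  (l.map (fun m => if m = j + 1 then j else m)).filter (fun m => m ≠ 0)

/-- `𝖿_jλ`: replace the row of length `j` by one of length `j+1`
(adding a new row of length `1` when `j = 0`). -/
def fStep (j : ℕ) (l : List ℕ) : List ℕ :=
  if j = 0 then l ++ [1] else l.map (fun m => if m = j then j + 1 else m)

end

end NeutralFermions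

section Anticommute

variable {R : Type*} [Ring R]

theorem mul_list_prod_of_anticommute {x : R} {L : List R} (h : ∀ y ∈ L, x * y = -(y * x)) :
    x * L.prod = (-1) ^ L.length * (L.prod * x) := by
  induction L with
  | nil => simp
  | cons y L ih =>
    rw [List.prod_cons, ← mul_assoc, h y List.mem_cons_self, neg_mul, mul_assoc,
      ih fun z hz => h z (List.mem_cons_of_mem y hz), ← mul_assoc y,
      ((Commute.neg_one_right y).pow_right _).eq]
    simp [pow_succ, mul_assoc]

theorem commute_mul_of_anticommute {x y z : R} (hx : x * z = -(z * x)) (hy : y * z = -(z * y)) :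
    Commute (x * y) z := by
  rw [Commute, SemiconjBy, mul_assoc, hy, mul_neg, ← mul_assoc, hx, neg_mul, neg_neg, mul_assoc]

end Anticommute

theorem List.Pairwise.exists_eq_append_cons {α : Type*} {r : α → α → Prop} {l : List α}
    (hl : l.Pairwise r) {a : α} (ha : a ∈ l) :
    ∃ A B, l = A ++ a :: B ∧ (∀ m ∈ A, r m a) ∧ ∀ m ∈ B, r a m := by
  obtain ⟨A, B, rfl⟩ := List.append_of_mem ha
  obtain ⟨-, hB, hAB⟩ := List.pairwise_append.mp hl
  exact ⟨A, B, rfl, fun m hm => hAB m hm a List.mem_cons_self, (List.pairwise_cons.mp hB).1⟩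

namespace NeutralFermions

section Fermions

variable {R M : Type*} [Ring R] [AddCommGroup M] [Module R M]

/-- The relations of `𝖢` in a form that needs no division by `2`. -/
structure IsNeutralFermionFamily (ψ : ℤ → R) : Prop where
  anticommute : ∀ p q, q ≠ -p → ψ p * ψ q = -(ψ q * ψ p)
  mul_self_eq_zero : ∀ k, k ≠ 0 → ψ k * ψ k = 0
  zero_mul_self : ψ 0 * ψ 0 = 1
  neg_mul_add_mul_neg : ∀ n : ℕ, n ≠ 0 → ψ (-n) * ψ n + ψ n * ψ (-n) = (-1) ^ n

def fermionMonomial (ψ : ℤ → R) (L : List ℕ) : R := (L.map fun m : ℕ => ψ m).prod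

def chevalleyE (ψ : ℤ → R) (j : ℕ) : R := (-1) ^ j * (ψ (-(j : ℤ) - 1) * ψ j)

def chevalleyF (ψ : ℤ → R) (j : ℕ) : R := (-1) ^ j * (ψ (j + 1) * ψ (-(j : ℤ)))

@[simp] theorem fermionMonomial_nil (ψ : ℤ → R) : fermionMonomial ψ [] = 1 := rfl

@[simp] theorem fermionMonomial_cons (ψ : ℤ → R) (m : ℕ) (L : List ℕ) :
    fermionMonomial ψ (m :: L) = ψ m * fermionMonomial ψ L := List.prod_cons

@[simp] theorem fermionMonomial_append (ψ : ℤ → R) (L L' : List ℕ) :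
    fermionMonomial ψ (L ++ L') = fermionMonomial ψ L * fermionMonomial ψ L' := by
  simp [fermionMonomial]

namespace IsNeutralFermionFamily

variable {ψ : ℤ → R}

theorem mul_fermionMonomial (hψ : IsNeutralFermionFamily ψ) {k : ℤ} {L : List ℕ}
    (h : ∀ m ∈ L, (m : ℤ) ≠ -k) :
    ψ k * fermionMonomial ψ L = (-1) ^ L.length * (fermionMonomial ψ L * ψ k) := by
  rw [fermionMonomial, mul_list_prod_of_anticommute, List.length_map]
  simp only [List.mem_map, forall_exists_index, and_imp, forall_apply_eq_imp_iff₂]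
  exact fun m hm => hψ.anticommute k m (h m hm)

theorem commute_fermionMonomial (hψ : IsNeutralFermionFamily ψ) {p q : ℤ} {L : List ℕ}
    (hp : ∀ m ∈ L, (m : ℤ) ≠ -p) (hq : ∀ m ∈ L, (m : ℤ) ≠ -q) :
    Commute (ψ p * ψ q) (fermionMonomial ψ L) :=
  Commute.list_prod_right _ _ <| by
    simp only [List.mem_map, forall_exists_index, and_imp, forall_apply_eq_imp_iff₂]
    exact fun m hm => commute_mul_of_anticommute (hψ.anticommute p m (hp m hm))
      (hψ.anticommute q m (hq m hm))

theorem mul_fermionMonomial_eq_zero (hψ : IsNeutralFermionFamily ψ) {k : ℕ} (hk : k ≠ 0)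
    {L : List ℕ} (h : k ∈ L) : ψ k * fermionMonomial ψ L = 0 := by
  obtain ⟨A, B, rfl⟩ := List.append_of_mem h
  rw [fermionMonomial_append, ← mul_assoc, hψ.mul_fermionMonomial fun m _ => by omega,
    mul_assoc, mul_assoc, fermionMonomial_cons, ← mul_assoc (ψ k),
    hψ.mul_self_eq_zero k (by omega)]
  simp

theorem chevalleyE_mul_eq_zero (hψ : IsNeutralFermionFamily ψ) {j : ℕ} (hj : j ≠ 0)
    {L : List ℕ} (h : j ∈ L) : chevalleyE ψ j * fermionMonomial ψ L = 0 := by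
  rw [chevalleyE, mul_assoc, mul_assoc, hψ.mul_fermionMonomial_eq_zero hj h, mul_zero, mul_zero]

theorem chevalleyF_mul_eq_zero (hψ : IsNeutralFermionFamily ψ) {j : ℕ} {L : List ℕ}
    (h : j + 1 ∈ L) : chevalleyF ψ j * fermionMonomial ψ L = 0 := by
  rw [chevalleyF, hψ.anticommute _ _ (by omega), mul_neg, neg_mul, mul_assoc, mul_assoc,
    ← Nat.cast_succ, hψ.mul_fermionMonomial_eq_zero j.succ_ne_zero h, mul_zero, mul_zero,
    neg_zero]

variable {v : M}

theorem neg_mul_fermionMonomial_smul (hψ : IsNeutralFermionFamily ψ)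
    (hv : ∀ k < 0, ψ k • v = 0) {k : ℕ} (hk : k ≠ 0) {L : List ℕ} (h : k ∉ L) :
    (ψ (-k) * fermionMonomial ψ L) • v = 0 := by
  rw [hψ.mul_fermionMonomial fun m hm => by simpa using ne_of_mem_of_not_mem hm h, ← mul_assoc,
    mul_smul, hv _ (by omega), smul_zero]

theorem neg_mul_mul_fermionMonomial_smul (hψ : IsNeutralFermionFamily ψ)
    (hv : ∀ k < 0, ψ k • v = 0) (k : ℕ) {L : List ℕ} (h : k = 0 ∨ k ∉ L) :
    (ψ (-k) * ψ k * fermionMonomial ψ L) • v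
      = (-1 : R) ^ k • fermionMonomial ψ L • v := by
  rcases eq_or_ne k 0 with rfl | hk
  · simp [hψ.zero_mul_self]
  · rw [eq_sub_of_add_eq (hψ.neg_mul_add_mul_neg k hk), sub_mul, sub_smul, mul_smul,
      mul_assoc, mul_smul (ψ k), hψ.neg_mul_fermionMonomial_smul hv hk (h.resolve_left hk),
      smul_zero, sub_zero]

theorem chevalleyE_smul (hψ : IsNeutralFermionFamily ψ) (hv : ∀ k < 0, ψ k • v = 0) (j : ℕ)
    {A B : List ℕ} (hA : j ∉ A) (hA' : j + 1 ∉ A) (hB : j + 1 ∉ B) :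
    chevalleyE ψ j • fermionMonomial ψ (A ++ (j + 1) :: B) • v
      = fermionMonomial ψ (A ++ j :: B) • v := by
  have hcomm : Commute (ψ (-(j : ℤ) - 1) * ψ j) (fermionMonomial ψ A) :=
    hψ.commute_fermionMonomial (fun m hm => by have := ne_of_mem_of_not_mem hm hA'; omega)
      (fun m hm => by have := ne_of_mem_of_not_mem hm hA; omega)
  have hswap : ψ (-(j : ℤ) - 1) * ψ j * ψ (j + 1) * fermionMonomial ψ B
      = -(ψ (-(j : ℤ) - 1) * ψ (j + 1) * fermionMonomial ψ (j :: B)) := by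
    rw [fermionMonomial_cons, mul_assoc _ (ψ j), hψ.anticommute _ _ (by omega)]
    noncomm_ring
  have hscalar := hψ.neg_mul_mul_fermionMonomial_smul hv (j + 1) (L := j :: B)
    (Or.inr (by simp [hB]))
  push_cast [neg_add'] at hscalar
  calc chevalleyE ψ j • fermionMonomial ψ (A ++ (j + 1) :: B) • v
      = ((-1) ^ j * fermionMonomial ψ A) •
          (ψ (-(j : ℤ) - 1) * ψ j * ψ (j + 1) * fermionMonomial ψ B) • v := by
        rw [← mul_smul, chevalleyE, fermionMonomial_append, fermionMonomial_cons,
          mul_assoc _ (ψ _ * ψ _), ← mul_assoc _ (fermionMonomial ψ A), hcomm.eq]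
        simp only [mul_smul, Nat.cast_succ]
    _ = fermionMonomial ψ (A ++ j :: B) • v := by
        rw [hswap, neg_smul, hscalar, fermionMonomial_append, mul_smul, mul_smul, pow_succ]
        rcases j.even_or_odd with hj | hj <;> simp [hj.neg_one_pow]

theorem chevalleyF_smul (hψ : IsNeutralFermionFamily ψ) (hv : ∀ k < 0, ψ k • v = 0) (j : ℕ)
    {A B : List ℕ} (hA : j ∉ A) (hB : j = 0 ∨ j ∉ B) :
    chevalleyF ψ j • fermionMonomial ψ (A ++ j :: B) • v
      = fermionMonomial ψ (A ++ (j + 1) :: B) • v := by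
  have hcomm : Commute (ψ (j + 1) * ψ (-(j : ℤ))) (fermionMonomial ψ A) :=
    hψ.commute_fermionMonomial (fun m _ => by omega)
      (fun m hm => by have := ne_of_mem_of_not_mem hm hA; omega)
  calc chevalleyF ψ j • fermionMonomial ψ (A ++ j :: B) • v
      = ((-1) ^ j * fermionMonomial ψ A * ψ (j + 1)) •
          (ψ (-(j : ℤ)) * ψ j * fermionMonomial ψ B) • v := by
        rw [← mul_smul, chevalleyF, fermionMonomial_append, fermionMonomial_cons,
          mul_assoc _ (ψ _ * ψ _), ← mul_assoc _ (fermionMonomial ψ A), hcomm.eq]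
        simp only [mul_smul]
    _ = fermionMonomial ψ (A ++ (j + 1) :: B) • v := by
        rw [hψ.neg_mul_mul_fermionMonomial_smul hv j hB]
        simp only [fermionMonomial_append, fermionMonomial_cons, mul_smul, Nat.cast_succ]
        rcases j.even_or_odd with hj | hj <;> simp [hj.neg_one_pow]

theorem chevalleyE_smul_eq_zero (hψ : IsNeutralFermionFamily ψ) (hv : ∀ k < 0, ψ k • v = 0)
    {j : ℕ} {L : List ℕ} (h : j + 1 ∉ L) :
    chevalleyE ψ j • fermionMonomial ψ L • v = 0 := by
  have hann := hψ.neg_mul_fermionMonomial_smul hv j.succ_ne_zero h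
  push_cast [neg_add'] at hann
  rw [← mul_smul, chevalleyE, hψ.anticommute _ _ (by omega), mul_neg, neg_mul, neg_smul,
    mul_assoc, mul_assoc, mul_smul, mul_smul, hann, smul_zero, smul_zero, neg_zero]

theorem chevalleyF_smul_eq_zero (hψ : IsNeutralFermionFamily ψ) (hv : ∀ k < 0, ψ k • v = 0)
    {j : ℕ} (hj : j ≠ 0) {L : List ℕ} (h : j ∉ L) :
    chevalleyF ψ j • fermionMonomial ψ L • v = 0 := by
  rw [← mul_smul, chevalleyF, mul_assoc, mul_assoc, mul_smul, mul_smul,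
    hψ.neg_mul_fermionMonomial_smul hv hj h, smul_zero, smul_zero]

end IsNeutralFermionFamily

end Fermions

theorem φ_mul_add_mul (p q : ℤ) : φ p * φ q + φ q * φ p =
    algebraMap ℂ Cl (if p = 0 ∧ q = 0 then 2 else if q = -p then (-1 : ℂ) ^ p else 0) := by
  simpa [φ] using RingQuot.mkAlgHom_rel ℂ (CRel.clifford p q)

theorem isNeutralFermionFamily_φ : IsNeutralFermionFamily φ where
  anticommute p q h := by
    have h' := φ_mul_add_mul p q
    rw [if_neg (by omega), if_neg h, map_zero] at h'
    exact eq_neg_of_add_eq_zero_left h'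
  mul_self_eq_zero k hk := by
    have h := φ_mul_add_mul k k
    rw [if_neg (by omega), if_neg (by omega), map_zero, ← two_smul ℂ] at h
    exact (smul_eq_zero.mp h).resolve_left two_ne_zero
  zero_mul_self := by
    have h := φ_mul_add_mul 0 0
    rw [if_pos ⟨rfl, rfl⟩, ← two_smul ℂ, Algebra.algebraMap_eq_smul_one] at h
    exact smul_right_injective Cl two_ne_zero h
  neg_mul_add_mul_neg n hn := by
    have h := φ_mul_add_mul (-n) n
    rw [if_neg (by omega), if_pos (by ring), zpow_neg, zpow_natCast, ← inv_pow, inv_neg_one,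
      map_pow, map_neg, map_one] at h
    exact h

theorem eC_eq_chevalleyE (j : ℕ) : eC j = chevalleyE φ j := by
  unfold eC chevalleyE
  split_ifs with h
  · simp [h]
  · rw [Algebra.smul_def]
    simp

theorem fC_eq_chevalleyF (j : ℕ) : fC j = chevalleyF φ j := by
  unfold fC chevalleyF
  split_ifs with h
  · simp [h]
  · rw [Algebra.smul_def]
    simp

def vacuum : Fock := Submodule.Quotient.mk 1

theorem φ_smul_vacuum : ∀ k < 0, φ k • vacuum = 0 := by
  intro k hk
  rw [vacuum, ← Submodule.Quotient.mk_smul, Submodule.Quotient.mk_eq_zero, smul_eq_mul, mul_one]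
  exact Submodule.subset_span ⟨k, hk, rfl⟩

def zeroPad (n : ℕ) : List ℕ := if Even n then [] else [0]

theorem eq_zero_of_mem_zeroPad {m n : ℕ} (h : m ∈ zeroPad n) : m = 0 := by
  unfold zeroPad at h
  split_ifs at h <;> simp_all

theorem notMem_append_zeroPad {m : ℕ} (hm : m ≠ 0) {B : List ℕ} (hB : m ∉ B) (n : ℕ) :
    m ∉ B ++ zeroPad n := by
  simpa [hB] using fun h => hm (eq_zero_of_mem_zeroPad h)

theorem vac_eq (l : List ℕ) : vac l = fermionMonomial φ (l ++ zeroPad l.length) • vacuum := by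
  rw [vac, vacuum, ← Submodule.Quotient.mk_smul, smul_eq_mul, mul_one, fermionMonomial, zeroPad]
  -- `vac` casts its list to `List ℤ` through the list monad
  simp only [List.pure_def, List.bind_eq_flatMap, ← List.map_eq_flatMap, List.map_map,
    Function.comp_def]
  split_ifs
  · rw [List.append_nil]
  · rfl

theorem vac_append_cons (A B : List ℕ) (a : ℕ) :
    vac (A ++ a :: B)
      = fermionMonomial φ (A ++ a :: (B ++ zeroPad (A.length + B.length + 1))) • vacuum := by
  rw [vac_eq, List.append_assoc, List.cons_append, List.length_append, List.length_cons,
    ← add_assoc]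

theorem vac_append_zero (l : List ℕ) : vac (l ++ [0]) = vac l := by
  rw [vac_eq, vac_eq, List.length_append, List.length_singleton]
  by_cases h : Even l.length <;>
    simp [zeroPad, h, Nat.even_add_one, isNeutralFermionFamily_φ.zero_mul_self]

theorem eC_smul_vac_append_cons {j : ℕ} {A B : List ℕ} (hA : j ∉ A) (hA' : j + 1 ∉ A)
    (hB : j + 1 ∉ B) : eC j • vac (A ++ (j + 1) :: B) = vac (A ++ j :: B) := by
  rw [vac_append_cons, vac_append_cons, eC_eq_chevalleyE]
  exact isNeutralFermionFamily_φ.chevalleyE_smul φ_smul_vacuum j hA hA'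
    (notMem_append_zeroPad j.succ_ne_zero hB _)

theorem fC_smul_vac_append_cons {j : ℕ} {A B : List ℕ} (hA : j ∉ A) (hB : j = 0 ∨ j ∉ B) :
    fC j • vac (A ++ j :: B) = vac (A ++ (j + 1) :: B) := by
  rw [vac_append_cons, vac_append_cons, fC_eq_chevalleyF]
  refine isNeutralFermionFamily_φ.chevalleyF_smul φ_smul_vacuum j hA ?_
  rcases eq_or_ne j 0 with hj | hj
  · exact Or.inl hj
  · exact Or.inr (notMem_append_zeroPad hj (hB.resolve_left hj) _)

theorem eC_smul_vac_of_mem {j : ℕ} (hj : j ≠ 0) {l : List ℕ} (h : j ∈ l) :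
    eC j • vac l = 0 := by
  rw [vac_eq, eC_eq_chevalleyE, ← mul_smul,
    isNeutralFermionFamily_φ.chevalleyE_mul_eq_zero hj (List.mem_append_left _ h), zero_smul]

theorem eC_smul_vac_of_notMem {j : ℕ} {l : List ℕ} (h : j + 1 ∉ l) : eC j • vac l = 0 := by
  rw [vac_eq, eC_eq_chevalleyE]
  exact isNeutralFermionFamily_φ.chevalleyE_smul_eq_zero φ_smul_vacuum
    (notMem_append_zeroPad j.succ_ne_zero h _)

theorem fC_smul_vac_of_mem {j : ℕ} {l : List ℕ} (h : j + 1 ∈ l) : fC j • vac l = 0 := by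
  rw [vac_eq, fC_eq_chevalleyF, ← mul_smul,
    isNeutralFermionFamily_φ.chevalleyF_mul_eq_zero (List.mem_append_left _ h), zero_smul]

theorem fC_smul_vac_of_notMem {j : ℕ} (hj : j ≠ 0) {l : List ℕ} (h : j ∉ l) :
    fC j • vac l = 0 := by
  rw [vac_eq, fC_eq_chevalleyF]
  exact isNeutralFermionFamily_φ.chevalleyF_smul_eq_zero φ_smul_vacuum hj
    (notMem_append_zeroPad hj h _)

theorem vac_eStep_append_cons {j : ℕ} {A B : List ℕ} (hA : ∀ m ∈ A, j + 1 < m)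
    (hB : ∀ m ∈ B, 0 < m ∧ m < j + 1) :
    vac (eStep j (A ++ (j + 1) :: B)) = vac (A ++ j :: B) := by
  have hmap : ∀ L : List ℕ, j + 1 ∉ L → L.map (fun m => if m = j + 1 then j else m) = L :=
    fun L hL => (List.map_congr_left fun m hm => if_neg (ne_of_mem_of_not_mem hm hL)).trans
      (List.map_id _)
  have hfilter : ∀ L : List ℕ, 0 ∉ L → L.filter (fun m => m ≠ 0) = L :=
    fun L hL => List.filter_eq_self.mpr fun m hm => by simpa using ne_of_mem_of_not_mem hm hL
  have hA' : j + 1 ∉ A ∧ 0 ∉ A :=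
    ⟨fun h => (hA _ h).false, fun h => by have := hA _ h; omega⟩
  have hB' : j + 1 ∉ B ∧ 0 ∉ B := ⟨fun h => (hB _ h).2.false, fun h => (hB _ h).1.false⟩
  rcases eq_or_ne j 0 with rfl | hj
  · obtain rfl : B = [] := List.eq_nil_iff_forall_not_mem.mpr fun m hm => by
      have := hB m hm
      omega
    rw [vac_append_zero, eStep, List.map_append, hmap A hA'.1, List.filter_append,
      hfilter A hA'.2]
    simp
  · rw [eStep, List.map_append, List.map_cons, if_pos rfl, hmap A hA'.1, hmap B hB'.1,
      List.filter_append, List.filter_cons, hfilter A hA'.2, hfilter B hB'.2]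
    simp [hj]

theorem fStep_append_cons {j : ℕ} (hj : j ≠ 0) {A B : List ℕ} (hA : j ∉ A) (hB : j ∉ B) :
    fStep j (A ++ j :: B) = A ++ (j + 1) :: B := by
  have hmap : ∀ L : List ℕ, j ∉ L → L.map (fun m => if m = j then j + 1 else m) = L :=
    fun L hL => (List.map_congr_left fun m hm => if_neg (ne_of_mem_of_not_mem hm hL)).trans
      (List.map_id _)
  simp [fStep, hj, hmap A hA, hmap B hB]

/-- The action of `𝖾_j` and `𝖿_j` on the basis `|λ⟩` of the Fock space. -/
theorem e_f_action_on_fock (l : List ℕ) (hs : l.Pairwise (· > ·))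
    (hp : ∀ m ∈ l, 0 < m) (j : ℕ) :
    ((j + 1 ∈ l ∧ j ∉ l) → eC j • vac l = vac (eStep j l)) ∧
    (¬ (j + 1 ∈ l ∧ j ∉ l) → eC j • vac l = 0) ∧
    (((j = 0 ∨ j ∈ l) ∧ j + 1 ∉ l) → fC j • vac l = vac (fStep j l)) ∧
    (¬ ((j = 0 ∨ j ∈ l) ∧ j + 1 ∉ l) → fC j • vac l = 0) := by
  have hl0 : 0 ∉ l := fun h => (hp 0 h).false
  refine ⟨fun ⟨hj1, hj⟩ => ?_, fun h => ?_, fun ⟨hj, hj1⟩ => ?_, fun h => ?_⟩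
  · obtain ⟨A, B, rfl, hA, hB⟩ := hs.exists_eq_append_cons hj1
    rw [vac_eStep_append_cons hA fun m hm => ⟨hp m (by simp [hm]), hB m hm⟩]
    exact eC_smul_vac_append_cons (fun h => hj (by simp [h])) (fun h => (hA _ h).false)
      (fun h => (hB _ h).false)
  · by_cases hj1 : j + 1 ∈ l
    · have hj : j ∈ l := not_not.mp fun hj => h ⟨hj1, hj⟩
      exact eC_smul_vac_of_mem (ne_of_mem_of_not_mem hj hl0) hj
    · exact eC_smul_vac_of_notMem hj1
  · rcases hj with rfl | hj
    · rw [fStep, if_pos rfl, ← vac_append_zero l]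
      exact fC_smul_vac_append_cons hl0 (Or.inl rfl)
    · obtain ⟨A, B, rfl, hA, hB⟩ := hs.exists_eq_append_cons hj
      have hAj : j ∉ A := fun h => (hA _ h).false
      have hBj : j ∉ B := fun h => (hB _ h).false
      rw [fStep_append_cons (ne_of_mem_of_not_mem hj hl0) hAj hBj]
      exact fC_smul_vac_append_cons hAj (Or.inr hBj)
  · by_cases hj1 : j + 1 ∈ l
    · exact fC_smul_vac_of_mem hj1
    · have hj : j ≠ 0 ∧ j ∉ l := by tauto
      exact fC_smul_vac_of_notMem hj.1 hj.2

end NeutralFermions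
end

section
/- Let (M,N) be a weak Morita pair for algebras A, B, with structure maps φ_A: M⊗_B N → A and φ_B: N⊗_A M → B, and let J_B = im(φ_B). If V is an irreducible B-module with J_B V ≠ 0, then the kernel of the A-module homomorphism Φ: M⊗_B V → Hom_B(N,V) given by Φ(m⊗v)(n) = φ_B(n⊗m)·v is the unique maximal proper A-submodule of M⊗_B V; in particular im(Φ) is an irreducible A-module. -/
/-!
Statement 17: let `(M,N)` be a weak Morita pair for rings `A`, `B` (an
`(A,B)`-bimodule `M` and a `(B,A)`-bimodule `N` with balanced biadditive
structure maps `φ_A : M × N → A`, `φ_B : N × M → B` satisfying the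
associativity constraints).  If `V` is an irreducible `B`-module with
`J_B V ≠ 0` (`J_B = im φ_B`), then the kernel of the induced map
`Φ : M ⊗_B V → Hom_B(N,V)`, `Φ(m⊗v)(n) = φ_B(n⊗m)v`, is the unique maximal
proper `A`-submodule of `M ⊗_B V`; in particular `im Φ ≅ (M⊗_B V)/ker Φ` is an
irreducible `A`-module.  The tensor product `M ⊗_B V` is encoded by an
`A`-module `P` together with a `B`-balanced `A`-bilinear map `p : M × V → P`
which generates `P` and has the universal property.
-/

open MulOpposite

theorem weakMoritaPair_kernel_unique_maximal
    (A B M N V P : Type)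
    [Ring A] [Ring B]
    [AddCommGroup M] [Module A M] [Module Bᵐᵒᵖ M] [SMulCommClass A Bᵐᵒᵖ M]
    [AddCommGroup N] [Module B N] [Module Aᵐᵒᵖ N] [SMulCommClass B Aᵐᵒᵖ N]
    (φA : M → N → A) (φB : N → M → B)
    -- `φ_A` is a biadditive `(A,A)`-bimodule map on `M ⊗_B N`
    (hφAadd1 : ∀ m m' nn, φA (m + m') nn = φA m nn + φA m' nn)
    (hφAadd2 : ∀ m nn nn', φA m (nn + nn') = φA m nn + φA m nn')
    (hφAl : ∀ (a : A) m nn, φA (a • m) nn = a * φA m nn)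
    (hφAr : ∀ (a : A) m nn, φA m (op a • nn) = φA m nn * a)
    (hφAbal : ∀ (b : B) m nn, φA (op b • m) nn = φA m (b • nn))
    -- `φ_B` is a biadditive `(B,B)`-bimodule map on `N ⊗_A M`
    (hφBadd1 : ∀ nn nn' m, φB (nn + nn') m = φB nn m + φB nn' m)
    (hφBadd2 : ∀ nn m m', φB nn (m + m') = φB nn m + φB nn m')
    (hφBl : ∀ (b : B) nn m, φB (b • nn) m = b * φB nn m)
    (hφBr : ∀ (b : B) nn m, φB nn (op b • m) = φB nn m * b)
    (hφBbal : ∀ (a : A) nn m, φB (op a • nn) m = φB nn (a • m))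
    -- the weak Morita pair constraints
    (hc1 : ∀ m nn m', φA m nn • m' = op (φB nn m') • m)
    (hc2 : ∀ nn m nn', φB nn m • nn' = op (φA m nn') • nn)
    -- `V` is an irreducible `B`-module with `J_B V ≠ 0`
    [AddCommGroup V] [Module B V] (hV : IsSimpleModule B V)
    (hJ : ∃ (nn : N) (m : M) (v : V), φB nn m • v ≠ 0)
    -- `P` realizes the tensor product `M ⊗_B V`
    [AddCommGroup P] [Module A P] (p : M → V → P)
    (hpadd1 : ∀ m m' v, p (m + m') v = p m v + p m' v)
    (hpadd2 : ∀ m v v', p m (v + v') = p m v + p m v')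
    (hpA : ∀ (a : A) m v, p (a • m) v = a • p m v)
    (hpbal : ∀ (b : B) m v, p (op b • m) v = p m (b • v))
    (hgen : Submodule.span A (Set.range fun x : M × V => p x.1 x.2) = ⊤)
    (huniv : ∀ (W : Type) [AddCommGroup W] [Module A W] (q : M → V → W),
      (∀ m m' v, q (m + m') v = q m v + q m' v) →
      (∀ m v v', q m (v + v') = q m v + q m v') →
      (∀ (a : A) m v, q (a • m) v = a • q m v) →
      (∀ (b : B) m v, q (op b • m) v = q m (b • v)) →
      ∃ g : P →ₗ[A] W, ∀ m v, g (p m v) = q m v)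
    -- `Φ : M ⊗_B V → Hom_B(N, V)`, `Φ(m ⊗ v)(n) = φ_B(n ⊗ m) v`,
    -- with kernel the `A`-submodule `KΦ`
    (Φ : P → N → V)
    (hΦadd : ∀ x y nn, Φ (x + y) nn = Φ x nn + Φ y nn)
    (hΦp : ∀ m v nn, Φ (p m v) nn = φB nn m • v)
    (KΦ : Submodule A P)
    (hK : ∀ x : P, x ∈ KΦ ↔ ∀ nn : N, Φ x nn = 0) :
    KΦ ≠ ⊤ ∧ (∀ U : Submodule A P, U ≠ ⊤ → U ≤ KΦ) ∧
      IsSimpleModule A (P ⧸ KΦ) := by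

  have hx_span : ∀ x : P, x ∈ Submodule.span A (Set.range fun x : M × V => p x.1 x.2) := by
    intro x; rw [hgen]; trivial
  have hΦ0 : ∀ nn, Φ 0 nn = 0 := by
    intro nn
    have h := hΦadd 0 0 nn
    rw [add_zero] at h
    nth_rewrite 1 [← add_zero (Φ 0 nn)] at h
    exact (add_left_cancel h).symm
  have hp0 : ∀ m, p m (0 : V) = 0 := by
    intro m
    have h := hpadd2 m 0 0
    rw [add_zero] at h
    nth_rewrite 1 [← add_zero (p m 0)] at h
    exact (add_left_cancel h).symm
  -- L1 : Φ is A-balanced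
  have L1 : ∀ x : P, ∀ (a : A) (nn : N), Φ (a • x) nn = Φ x (op a • nn) := by
    intro x
    refine Submodule.span_induction (p := fun x _ => ∀ (a : A) (nn : N),
        Φ (a • x) nn = Φ x (op a • nn)) ?_ ?_ ?_ ?_ (hx_span x)
    · rintro _ ⟨⟨m, v⟩, rfl⟩ a nn
      rw [← hpA, hΦp, ← hφBbal, ← hΦp]
    · intro a nn; rw [smul_zero, hΦ0, hΦ0]
    · intro x y hx hy ihx ihy a nn
      rw [smul_add, hΦadd, ihx, ihy, hΦadd]
    · intro a' x hx ih a nn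
      rw [smul_smul, ih, ih, op_mul, mul_smul]
  -- L2 : Φ x is B-linear in nn
  have L2 : ∀ x : P, ∀ (b : B) (nn : N), Φ x (b • nn) = b • Φ x nn := by
    intro x
    refine Submodule.span_induction (p := fun x _ => ∀ (b : B) (nn : N),
        Φ x (b • nn) = b • Φ x nn) ?_ ?_ ?_ ?_ (hx_span x)
    · rintro _ ⟨⟨m, v⟩, rfl⟩ b nn
      rw [hΦp, hφBl, mul_smul, ← hΦp]
    · intro b nn; rw [hΦ0, hΦ0, smul_zero]
    · intro x y hx hy ihx ihy b nn
      rw [hΦadd, ihx, ihy, hΦadd, smul_add]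
    · intro a x hx ih b nn
      rw [L1, ← smul_comm b (op a) nn, ih, L1]
  -- L3 : the key identity  p m (Φ x nn) = φA m nn • x
  have L3 : ∀ x : P, ∀ (m : M) (nn : N), p m (Φ x nn) = φA m nn • x := by
    intro x
    refine Submodule.span_induction (p := fun x _ => ∀ (m : M) (nn : N),
        p m (Φ x nn) = φA m nn • x) ?_ ?_ ?_ ?_ (hx_span x)
    · rintro _ ⟨⟨m', v'⟩, rfl⟩ m nn
      rw [hΦp, ← hpbal, ← hc1, hpA]
    · intro m nn; rw [hΦ0, hp0, smul_zero]
    · intro x y hx hy ihx ihy m nn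
      rw [hΦadd, hpadd2, ihx, ihy, smul_add]
    · intro a x hx ih m nn
      rw [L1, ih, hφAr, mul_smul]
  -- the element witnessing KΦ ≠ ⊤
  obtain ⟨nn0, m0, v0, hnz⟩ := hJ
  have hKne : KΦ ≠ ⊤ := by
    intro h
    have hmem : p m0 v0 ∈ KΦ := h ▸ Submodule.mem_top
    have := (hK _).mp hmem nn0
    rw [hΦp] at this
    exact hnz this
  -- any submodule not contained in KΦ is all of P
  have key : ∀ U : Submodule A P, ¬ U ≤ KΦ → U = ⊤ := by
    intro U hU
    obtain ⟨x, hxU, hxK⟩ := Set.not_subset.mp hU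
    obtain ⟨nn, hnn⟩ : ∃ nn, Φ x nn ≠ 0 := by
      by_contra h
      push_neg at h
      exact hxK ((hK x).mpr h)
    have hspan : Submodule.span B {Φ x nn} = ⊤ := by
      rcases eq_bot_or_eq_top (Submodule.span B {Φ x nn}) with h | h
      · exfalso
        apply hnn
        have : Φ x nn ∈ Submodule.span B {Φ x nn} :=
          Submodule.mem_span_singleton_self _
        rw [h] at this
        simpa using this
      · exact h
    rw [eq_top_iff, ← hgen]
    refine Submodule.span_le.mpr ?_
    rintro _ ⟨⟨m, v⟩, rfl⟩
    have hv : v ∈ Submodule.span B {Φ x nn} := by rw [hspan]; trivial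
    obtain ⟨b, hb⟩ := Submodule.mem_span_singleton.mp hv
    show p m v ∈ U
    rw [← hb, ← L2, L3]
    exact Submodule.smul_mem U _ hxU
  have hmax : ∀ U : Submodule A P, U ≠ ⊤ → U ≤ KΦ := by
    intro U hU
    by_contra h
    exact hU (key U h)
  refine ⟨hKne, hmax, ?_⟩
  rw [isSimpleModule_iff_isCoatom]
  exact ⟨hKne, fun U hU => key U (lt_iff_le_not_ge.mp hU).2⟩
end

section
/- Let (M,N) be a weak Morita pair for algebras A, B with J_A = im(φ_A) and J_B = im(φ_B). Then the assignment V ↦ D_M^N V (the irreducible head of M⊗_B V) induces a bijection between the set of isomorphism classes of irreducible B-modules V with J_B V ≠ 0 and the set of isomorphism classes of irreducible A-modules W with J_A W ≠ 0, with inverse W ↦ D_N^M W. -/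
/-!
Statement 18: for a weak Morita pair `(M,N)` over rings `A`, `B` with
`J_A = im φ_A`, `J_B = im φ_B`, the assignment `V ↦ D_M^N V` (the irreducible
head of `M ⊗_B V`) induces a bijection between isomorphism classes of
irreducible `B`-modules `V` with `J_B V ≠ 0` and isomorphism classes of
irreducible `A`-modules `W` with `J_A W ≠ 0`, with inverse `W ↦ D_N^M W`.

Since `M ⊗_B V` has irreducible head `D_M^N V`, an irreducible `A`-module `W`
satisfies `W ≅ D_M^N V` iff there is a nonzero `B`-balanced `A`-bilinear map
`M × V → W`; this is the relation `Linked V W` below, and `CoLinked W V` is the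
analogous relation expressing `V ≅ D_N^M W`.  The bijection statement is then:
`Linked` is total, co-total, and induces a well-defined injective map on
isomorphism classes in both directions, and `Linked` coincides with the
inverse correspondence `CoLinked`.
-/

open MulOpposite

/-- A bundled module over `A`. -/
structure ModuleOver (A : Type) [Ring A] where
  carrier : Type
  [grp : AddCommGroup carrier]
  [mod : Module A carrier]

attribute [instance] ModuleOver.grp ModuleOver.mod

section WeakMorita

variable (A B M N : Type) [Ring A] [Ring B]
  [AddCommGroup M] [Module A M] [Module Bᵐᵒᵖ M]
  [AddCommGroup N] [Module B N] [Module Aᵐᵒᵖ N]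

/-- `W ≅ D_M^N V`: there is a nonzero `B`-balanced `A`-bilinear map
`M × V → W` (such a map exhibits the irreducible `W` as the head of
`M ⊗_B V`). -/
def Linked (V : Type) [AddCommGroup V] [Module B V]
    (W : Type) [AddCommGroup W] [Module A W] : Prop :=
  ∃ q : M → V → W,
    (∀ m m' v, q (m + m') v = q m v + q m' v) ∧
    (∀ m v v', q m (v + v') = q m v + q m v') ∧
    (∀ (a : A) m v, q (a • m) v = a • q m v) ∧
    (∀ (b : B) m v, q (op b • m) v = q m (b • v)) ∧
    q ≠ fun _ _ => 0

/-- `V ≅ D_N^M W`: there is a nonzero `A`-balanced `B`-bilinear map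
`N × W → V`. -/
def CoLinked (W : Type) [AddCommGroup W] [Module A W]
    (V : Type) [AddCommGroup V] [Module B V] : Prop :=
  ∃ q : N → W → V,
    (∀ nn nn' w, q (nn + nn') w = q nn w + q nn' w) ∧
    (∀ nn w w', q nn (w + w') = q nn w + q nn w') ∧
    (∀ (b : B) nn w, q (b • nn) w = b • q nn w) ∧
    (∀ (a : A) nn w, q (op a • nn) w = q nn (a • w)) ∧
    q ≠ fun _ _ => 0

end WeakMorita

set_option linter.unusedSectionVars false


structure MoritaData (A B M N : Type) [Ring A] [Ring B]
    [AddCommGroup M] [Module A M] [Module Bᵐᵒᵖ M]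
    [AddCommGroup N] [Module B N] [Module Aᵐᵒᵖ N] where
  φA : M → N → A
  φB : N → M → B
  hφAadd1 : ∀ m m' nn, φA (m + m') nn = φA m nn + φA m' nn
  hφAadd2 : ∀ m nn nn', φA m (nn + nn') = φA m nn + φA m nn'
  hφAl : ∀ (a : A) m nn, φA (a • m) nn = a * φA m nn
  hφAr : ∀ (a : A) m nn, φA m (op a • nn) = φA m nn * a
  hφAbal : ∀ (b : B) m nn, φA (op b • m) nn = φA m (b • nn)
  hφBadd1 : ∀ nn nn' m, φB (nn + nn') m = φB nn m + φB nn' m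
  hφBadd2 : ∀ nn m m', φB nn (m + m') = φB nn m + φB nn m'
  hφBl : ∀ (b : B) nn m, φB (b • nn) m = b * φB nn m
  hφBr : ∀ (b : B) nn m, φB nn (op b • m) = φB nn m * b
  hφBbal : ∀ (a : A) nn m, φB (op a • nn) m = φB nn (a • m)
  hc1 : ∀ m nn m', φA m nn • m' = op (φB nn m') • m
  hc2 : ∀ nn m nn', φB nn m • nn' = op (φA m nn') • nn

def MoritaData.swap {A B M N : Type} [Ring A] [Ring B]
    [AddCommGroup M] [Module A M] [Module Bᵐᵒᵖ M]
    [AddCommGroup N] [Module B N] [Module Aᵐᵒᵖ N]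
    (D : MoritaData A B M N) : MoritaData B A N M where
  φA := D.φB
  φB := D.φA
  hφAadd1 := D.hφBadd1
  hφAadd2 := D.hφBadd2
  hφAl := D.hφBl
  hφAr := D.hφBr
  hφAbal := D.hφBbal
  hφBadd1 := D.hφAadd1
  hφBadd2 := D.hφAadd2
  hφBl := D.hφAl
  hφBr := D.hφAr
  hφBbal := D.hφAbal
  hc1 := D.hc2
  hc2 := D.hc1

structure LinkMap (A B M : Type) [Ring A] [Ring B]
    [AddCommGroup M] [Module A M] [Module Bᵐᵒᵖ M]
    (V W : Type) [AddCommGroup V] [Module B V] [AddCommGroup W] [Module A W] where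
  q : M → V → W
  add1 : ∀ m m' v, q (m + m') v = q m v + q m' v
  add2 : ∀ m v v', q m (v + v') = q m v + q m v'
  lsmul : ∀ (a : A) m v, q (a • m) v = a • q m v
  bal : ∀ (b : B) m v, q (op b • m) v = q m (b • v)
  ne : q ≠ fun _ _ => 0

section Aux

variable {A B M N : Type} [Ring A] [Ring B]
  [AddCommGroup M] [Module A M] [Module Bᵐᵒᵖ M] [SMulCommClass A Bᵐᵒᵖ M]
  [AddCommGroup N] [Module B N] [Module Aᵐᵒᵖ N] [SMulCommClass B Aᵐᵒᵖ N]
  {V W W' : Type} [AddCommGroup V] [Module B V]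
  [AddCommGroup W] [Module A W] [AddCommGroup W'] [Module A W']

namespace LinkMap

variable (Q : LinkMap A B M V W)

lemma zero2 (m : M) : Q.q m 0 = 0 := by
  have h := Q.add2 m 0 0
  rw [add_zero] at h
  exact (left_eq_add.mp h)

lemma exists_ne' : ∃ m v, Q.q m v ≠ 0 := by
  by_contra h
  push_neg at h
  exact Q.ne (funext fun m => funext fun v => h m v)

lemma inj2 (hV : IsSimpleModule B V) {x : V} (hx : ∀ m, Q.q m x = 0) : x = 0 := by
  haveI := hV
  set Z : Submodule B V :=
    { carrier := {v | ∀ m, Q.q m v = 0}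
      add_mem' := fun hv hw m => by rw [Q.add2, hv m, hw m, add_zero]
      zero_mem' := fun m => Q.zero2 m
      smul_mem' := by intro b v hv m; rw [← Q.bal]; exact hv _ } with hZ
  rcases eq_bot_or_eq_top Z with h | h
  · have hm : x ∈ Z := hx
    rw [h, Submodule.mem_bot] at hm
    exact hm
  · obtain ⟨m, v, hmv⟩ := Q.exists_ne'
    have hm : v ∈ Z := h ▸ Submodule.mem_top
    exact absurd (hm m) hmv

lemma uniq2 (hV : IsSimpleModule B V) {x y : V} (h : ∀ m, Q.q m x = Q.q m y) : x = y := by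
  have hz : ∀ m, Q.q m (x - y) = 0 := fun m => by
    have hs : Q.q m (x - y) = Q.q m x - Q.q m y :=
      map_sub (AddMonoidHom.mk' (Q.q m) (Q.add2 m)) x y
    rw [hs, h m, sub_self]
  exact sub_eq_zero.mp (Q.inj2 hV hz)

lemma span_top (hW : IsSimpleModule A W) :
    Submodule.span A (Set.range fun p : M × V => Q.q p.1 p.2) = ⊤ := by
  haveI := hW
  rcases eq_bot_or_eq_top (Submodule.span A (Set.range fun p : M × V => Q.q p.1 p.2)) with h | h
  · obtain ⟨m, v, hmv⟩ := Q.exists_ne'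
    have hmem : Q.q m v ∈ Submodule.span A (Set.range fun p : M × V => Q.q p.1 p.2) :=
      Submodule.subset_span ⟨(m, v), rfl⟩
    rw [h, Submodule.mem_bot] at hmem
    exact absurd hmem hmv
  · exact h

end LinkMap

lemma jA_ne (D : MoritaData A B M N) (hV : IsSimpleModule B V)
    (Q : LinkMap A B M V W)
    (hJB : ∃ (nn : N) (m : M) (v : V), D.φB nn m • v ≠ 0) :
    ∃ (m : M) (nn : N) (w : W), D.φA m nn • w ≠ 0 := by
  haveI := hV
  obtain ⟨m₀, v₀, hq⟩ := Q.exists_ne'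
  set Z : Submodule B V :=
    { carrier := {v | ∀ (nn : N) (m : M), D.φB nn m • v = 0}
      add_mem' := by intro x y hx hy nn m; rw [smul_add, hx, hy, add_zero]
      zero_mem' := by intro nn m; rw [smul_zero]
      smul_mem' := by intro b v hv nn m; rw [← mul_smul, ← D.hφBr]; exact hv _ _ } with hZd
  have hZ : Z = ⊥ := by
    rcases eq_bot_or_eq_top Z with h | h
    · exact h
    · obtain ⟨nn, m, v, hnz⟩ := hJB
      have hm : v ∈ Z := h ▸ Submodule.mem_top
      exact absurd (hm nn m) hnz
  have hv₀ : ¬ (∀ (nn : N) (m : M), D.φB nn m • v₀ = 0) := by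
    intro hall
    have hm : v₀ ∈ Z := hall
    rw [hZ, Submodule.mem_bot] at hm
    rw [hm, Q.zero2] at hq
    exact hq rfl
  push_neg at hv₀
  obtain ⟨n, m', hnm⟩ := hv₀
  have hx : ∃ m, Q.q m (D.φB n m' • v₀) ≠ 0 := by
    by_contra hc; push_neg at hc
    exact hnm (Q.inj2 hV hc)
  obtain ⟨m, hm⟩ := hx
  refine ⟨m, n, Q.q m' v₀, ?_⟩
  rwa [show D.φA m n • Q.q m' v₀ = Q.q m (D.φB n m' • v₀) by
    rw [← Q.lsmul, D.hc1, Q.bal]]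


lemma exists_colink (D : MoritaData A B M N)
    (hV : IsSimpleModule B V) (hW : IsSimpleModule A W)
    (Q : LinkMap A B M V W) :
    ∃ P : N → W → V,
      (∀ n n' w, P (n + n') w = P n w + P n' w) ∧
      (∀ n w w', P n (w + w') = P n w + P n w') ∧
      (∀ (b : B) n w, P (b • n) w = b • P n w) ∧
      (∀ (a : A) n w, P (op a • n) w = P n (a • w)) ∧
      (∀ n m v, P n (Q.q m v) = D.φB n m • v) ∧
      (∀ m n w, Q.q m (P n w) = D.φA m n • w) := by
  have hspan := Q.span_top hW
  have hex : ∀ (w : W) (n : N), ∃ x : V, ∀ m, Q.q m x = D.φA m n • w := by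
    intro w
    have hw : w ∈ Submodule.span A (Set.range fun p : M × V => Q.q p.1 p.2) := by
      rw [hspan]; trivial
    induction hw using Submodule.span_induction with
    | mem x hx =>
      obtain ⟨⟨m', v'⟩, rfl⟩ := hx
      intro n
      refine ⟨D.φB n m' • v', fun m => ?_⟩
      rw [← Q.bal, ← D.hc1, Q.lsmul]
    | zero => exact fun n => ⟨0, fun m => by rw [Q.zero2, smul_zero]⟩
    | add x y hx hy ihx ihy =>
      intro n
      obtain ⟨x₁, h₁⟩ := ihx n
      obtain ⟨x₂, h₂⟩ := ihy n
      exact ⟨x₁ + x₂, fun m => by rw [Q.add2, h₁, h₂, ← smul_add]⟩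
    | smul a x hx ih =>
      intro n
      obtain ⟨x₁, h₁⟩ := ih (op a • n)
      exact ⟨x₁, fun m => by rw [h₁, D.hφAr, mul_smul]⟩
  choose P hP using fun (n : N) (w : W) => hex w n
  have huniq : ∀ {x y : V}, (∀ m, Q.q m x = Q.q m y) → x = y := fun h => Q.uniq2 hV h
  refine ⟨P, ?_, ?_, ?_, ?_, ?_, fun m n w => hP n w m⟩
  · intro n n' w; apply huniq; intro m
    rw [hP, Q.add2, hP, hP, D.hφAadd2, add_smul]
  · intro n w w'; apply huniq; intro m
    rw [hP, Q.add2, hP, hP, smul_add]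
  · intro b n w; apply huniq; intro m
    rw [hP, ← Q.bal, hP, D.hφAbal]
  · intro a n w; apply huniq; intro m
    rw [hP, hP, D.hφAr, mul_smul]
  · intro n m' v; apply huniq; intro m
    rw [hP, ← Q.bal, ← D.hc1, Q.lsmul]

lemma link_unique (D : MoritaData A B M N)
    (hV : IsSimpleModule B V) (hW : IsSimpleModule A W) (hW' : IsSimpleModule A W')
    (Q : LinkMap A B M V W) (Q' : LinkMap A B M V W')
    (hJB : ∃ (nn : N) (m : M) (v : V), D.φB nn m • v ≠ 0) :
    Nonempty (W ≃ₗ[A] W') := by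
  obtain ⟨P, Pa1, Pa2, Pl, Pb, PofQ, QofP⟩ := exists_colink D hV hW Q
  obtain ⟨P', P'a1, P'a2, P'l, P'b, P'ofQ, Q'ofP⟩ := exists_colink D hV hW' Q'
  have hJA : ∃ (m : M) (nn : N) (w : W), D.φA m nn • w ≠ 0 := jA_ne D hV Q hJB
  have hJA' : ∃ (m : M) (nn : N) (w : W'), D.φA m nn • w ≠ 0 := jA_ne D hV Q' hJB
  have Pzero : ∀ n, P n 0 = 0 := fun n => by
    have h := Pa2 n 0 0; rw [add_zero] at h; exact left_eq_add.mp h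
  have P'zero : ∀ n, P' n 0 = 0 := fun n => by
    have h := P'a2 n 0 0; rw [add_zero] at h; exact left_eq_add.mp h
  have Pinj : ∀ {w : W}, (∀ n, P n w = 0) → w = 0 := by
    intro w hw
    haveI := hW
    set S : Submodule A W :=
      { carrier := {w | ∀ n, P n w = 0}
        add_mem' := by intro x y hx hy n; rw [Pa2, hx, hy, add_zero]
        zero_mem' := Pzero
        smul_mem' := by intro a w hw n; rw [← Pb]; exact hw _ } with hSd
    rcases eq_bot_or_eq_top S with h | h
    · have hm : w ∈ S := hw
      rw [h, Submodule.mem_bot] at hm; exact hm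
    · exfalso
      obtain ⟨m, n, w₀, hnz⟩ := hJA
      have hm : w₀ ∈ S := h ▸ Submodule.mem_top
      apply hnz
      rw [← QofP m n w₀, hm n, Q.zero2]
  have P'inj : ∀ {w : W'}, (∀ n, P' n w = 0) → w = 0 := by
    intro w hw
    haveI := hW'
    set S : Submodule A W' :=
      { carrier := {w | ∀ n, P' n w = 0}
        add_mem' := by intro x y hx hy n; rw [P'a2, hx, hy, add_zero]
        zero_mem' := P'zero
        smul_mem' := by intro a w hw n; rw [← P'b]; exact hw _ } with hSd
    rcases eq_bot_or_eq_top S with h | h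
    · have hm : w ∈ S := hw
      rw [h, Submodule.mem_bot] at hm; exact hm
    · exfalso
      obtain ⟨m, n, w₀, hnz⟩ := hJA'
      have hm : w₀ ∈ S := h ▸ Submodule.mem_top
      apply hnz
      rw [← Q'ofP m n w₀, hm n, Q'.zero2]
  have Puniq : ∀ {x y : W}, (∀ n, P n x = P n y) → x = y := by
    intro x y h
    have hz : ∀ n, P n (x - y) = 0 := fun n => by
      have hs : P n (x - y) = P n x - P n y :=
        map_sub (AddMonoidHom.mk' (P n) (Pa2 n)) x y
      rw [hs, h n, sub_self]
    exact sub_eq_zero.mp (Pinj hz)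
  have P'uniq : ∀ {x y : W'}, (∀ n, P' n x = P' n y) → x = y := by
    intro x y h
    have hz : ∀ n, P' n (x - y) = 0 := fun n => by
      have hs : P' n (x - y) = P' n x - P' n y :=
        map_sub (AddMonoidHom.mk' (P' n) (P'a2 n)) x y
      rw [hs, h n, sub_self]
    exact sub_eq_zero.mp (P'inj hz)
  have hexE : ∀ w : W, ∃ w' : W', ∀ n, P' n w' = P n w := by
    intro w
    have hw : w ∈ Submodule.span A (Set.range fun p : M × V => Q.q p.1 p.2) := by
      rw [Q.span_top hW]; trivial
    induction hw using Submodule.span_induction with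
    | mem x hx =>
      obtain ⟨⟨m, v⟩, rfl⟩ := hx
      exact ⟨Q'.q m v, fun n => by rw [P'ofQ, PofQ]⟩
    | zero => exact ⟨0, fun n => by rw [P'zero, Pzero]⟩
    | add x y hx hy ihx ihy =>
      obtain ⟨x', h₁⟩ := ihx
      obtain ⟨y', h₂⟩ := ihy
      exact ⟨x' + y', fun n => by rw [P'a2, Pa2, h₁, h₂]⟩
    | smul a x hx ih =>
      obtain ⟨x', h₁⟩ := ih
      exact ⟨a • x', fun n => by rw [← P'b, ← Pb, h₁]⟩
  have hexE' : ∀ w' : W', ∃ w : W, ∀ n, P n w = P' n w' := by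
    intro w'
    have hw : w' ∈ Submodule.span A (Set.range fun p : M × V => Q'.q p.1 p.2) := by
      rw [Q'.span_top hW']; trivial
    induction hw using Submodule.span_induction with
    | mem x hx =>
      obtain ⟨⟨m, v⟩, rfl⟩ := hx
      exact ⟨Q.q m v, fun n => by rw [P'ofQ, PofQ]⟩
    | zero => exact ⟨0, fun n => by rw [P'zero, Pzero]⟩
    | add x y hx hy ihx ihy =>
      obtain ⟨x', h₁⟩ := ihx
      obtain ⟨y', h₂⟩ := ihy
      exact ⟨x' + y', fun n => by rw [P'a2, Pa2, h₁, h₂]⟩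
    | smul a x hx ih =>
      obtain ⟨x', h₁⟩ := ih
      exact ⟨a • x', fun n => by rw [← P'b, ← Pb, h₁]⟩
  choose e he using hexE
  choose e' he' using hexE'
  refine ⟨{ toFun := e
            map_add' := fun x y => P'uniq fun n => by rw [he, P'a2, he, he, Pa2]
            map_smul' := fun a x => by
              refine P'uniq fun n => ?_
              rw [he, ← Pb, ← he, P'b]; rfl
            invFun := e'
            left_inv := fun w => Puniq fun n => by rw [he', he]
            right_inv := fun w' => P'uniq fun n => by rw [he, he'] }⟩

def domModule (A : Type) {B N V : Type} [Ring A] [Ring B]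
    [AddCommGroup N] [Module B N] [Module Aᵐᵒᵖ N] [SMulCommClass B Aᵐᵒᵖ N]
    [AddCommGroup V] [Module B V] : Module A (N →ₗ[B] V) where
  smul a f :=
    { toFun := fun n => f (op a • n)
      map_add' := fun n n' => by
        show f (op a • (n + n')) = f (op a • n) + f (op a • n')
        rw [smul_add, map_add]
      map_smul' := fun b n => by
        show f (op a • (b • n)) = b • f (op a • n)
        have h : op a • (b • n) = b • (op a • n) := (smul_comm b (op a) n).symm
        rw [h, map_smul] }
  one_smul f := by ext n; show f (op (1 : A) • n) = f n; rw [op_one, one_smul]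
  mul_smul a a' f := by
    ext n; show f (op (a * a') • n) = f (op a' • op a • n)
    rw [op_mul, mul_smul]
  smul_zero a := by ext n; rfl
  smul_add a f g := by ext n; rfl
  add_smul a a' f := by
    ext n; show f (op (a + a') • n) = f (op a • n) + f (op a' • n)
    rw [op_add, add_smul, map_add]
  zero_smul f := by ext n; show f (op (0 : A) • n) = 0; rw [op_zero, zero_smul, map_zero]

lemma exists_linked (D : MoritaData A B M N) (V₀ : Type) [AddCommGroup V₀] [Module B V₀]
    (hV : IsSimpleModule B V₀)
    (hJB : ∃ (nn : N) (m : M) (v : V₀), D.φB nn m • v ≠ 0) :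
    ∃ Wo : ModuleOver A, IsSimpleModule A Wo.carrier ∧ Nonempty (LinkMap A B M V₀ Wo.carrier) := by
  letI : Module A (N →ₗ[B] V₀) := domModule A
  haveI := hV
  set Φ : M → V₀ → (N →ₗ[B] V₀) := fun m v =>
    { toFun := fun n => D.φB n m • v
      map_add' := fun n n' => by
        show D.φB (n + n') m • v = D.φB n m • v + D.φB n' m • v
        rw [D.hφBadd1, add_smul]
      map_smul' := fun b n => by
        show D.φB (b • n) m • v = b • (D.φB n m • v)
        rw [D.hφBl, mul_smul] } with hΦdef
  have hgen : ∀ f : N →ₗ[B] V₀, f ≠ 0 → ∀ m v, ∃ a : A, a • f = Φ m v := by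
    intro f hf m v
    have hn : ∃ n, f n ≠ 0 := by
      by_contra h; push_neg at h
      exact hf (LinearMap.ext fun n => by rw [h n]; rfl)
    obtain ⟨n₀, hn₀⟩ := hn
    have hspan : Submodule.span B {f n₀} = ⊤ := by
      rcases eq_bot_or_eq_top (Submodule.span B {f n₀}) with h | h
      · exfalso; apply hn₀
        have hm := Submodule.mem_span_singleton_self (R := B) (f n₀)
        rw [h, Submodule.mem_bot] at hm; exact hm
      · exact h
    have hv : v ∈ Submodule.span B {f n₀} := by rw [hspan]; trivial
    obtain ⟨b, hb⟩ := Submodule.mem_span_singleton.mp hv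
    refine ⟨D.φA (op b • m) n₀, ?_⟩
    ext n
    show f (op (D.φA (op b • m) n₀) • n) = D.φB n m • v
    rw [← D.hc2, map_smul, D.hφBr, mul_smul, hb]
  set Ws : Submodule A (N →ₗ[B] V₀) :=
    Submodule.span A (Set.range fun p : M × V₀ => Φ p.1 p.2) with hWsdef
  obtain ⟨n₁, m₁, v₁, h₁⟩ := hJB
  have hΦ₁ : Φ m₁ v₁ ≠ 0 := by
    intro h
    apply h₁
    rw [show D.φB n₁ m₁ • v₁ = Φ m₁ v₁ n₁ from rfl, h]; rfl
  have hmem : ∀ m v, Φ m v ∈ Ws := fun m v => Submodule.subset_span ⟨(m, v), rfl⟩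
  have hatom : IsAtom Ws := by
    constructor
    · intro h
      apply hΦ₁
      have hm := hmem m₁ v₁
      rw [h, Submodule.mem_bot] at hm; exact hm
    · intro P hP
      by_contra hPne
      obtain ⟨f, hfP, hf⟩ := Submodule.ne_bot_iff P |>.mp hPne
      have hle : Ws ≤ P := by
        rw [hWsdef]
        apply Submodule.span_le.mpr
        rintro g ⟨⟨m, v⟩, rfl⟩
        obtain ⟨a, ha⟩ := hgen f hf m v
        show Φ m v ∈ P
        exact ha ▸ P.smul_mem a hfP
      exact hP.not_ge hle
  haveI hsimp : IsSimpleModule A ↥Ws := isSimpleModule_iff_isAtom.mpr hatom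
  refine ⟨ModuleOver.mk ↥Ws, hsimp, ⟨⟨fun m v => ⟨Φ m v, hmem m v⟩, ?_, ?_, ?_, ?_, ?_⟩⟩⟩
  · intro m m' v
    apply Subtype.ext
    show Φ (m + m') v = Φ m v + Φ m' v
    ext n
    show D.φB n (m + m') • v = D.φB n m • v + D.φB n m' • v
    rw [D.hφBadd2, add_smul]
  · intro m v v'
    apply Subtype.ext
    show Φ m (v + v') = Φ m v + Φ m v'
    ext n
    show D.φB n m • (v + v') = D.φB n m • v + D.φB n m • v'
    rw [smul_add]
  · intro a m v
    apply Subtype.ext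
    show Φ (a • m) v = a • Φ m v
    ext n
    show D.φB n (a • m) • v = D.φB (op a • n) m • v
    rw [D.hφBbal]
  · intro b m v
    apply Subtype.ext
    show Φ (op b • m) v = Φ m (b • v)
    ext n
    show D.φB n (op b • m) • v = D.φB n m • (b • v)
    rw [D.hφBr, mul_smul]
  · intro h
    apply hΦ₁
    have hc := congrFun (congrFun h m₁) v₁
    exact Subtype.ext_iff.mp hc


lemma linked_def {A B M : Type} [Ring A] [Ring B]
    [AddCommGroup M] [Module A M] [Module Bᵐᵒᵖ M]
    {V W : Type} [AddCommGroup V] [Module B V] [AddCommGroup W] [Module A W] :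
    Linked A B M V W ↔ Nonempty (LinkMap A B M V W) := by
  constructor
  · intro h
    obtain ⟨q, h1, h2, h3, h4, h5⟩ := h
    exact ⟨⟨q, h1, h2, h3, h4, h5⟩⟩
  · rintro ⟨Q⟩
    exact ⟨Q.q, Q.add1, Q.add2, Q.lsmul, Q.bal, Q.ne⟩

lemma colinked_def {A B N : Type} [Ring A] [Ring B]
    [AddCommGroup N] [Module B N] [Module Aᵐᵒᵖ N]
    {V W : Type} [AddCommGroup V] [Module B V] [AddCommGroup W] [Module A W] :
    CoLinked A B N W V ↔ Nonempty (LinkMap B A N W V) := by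
  constructor
  · intro h
    obtain ⟨q, h1, h2, h3, h4, h5⟩ := h
    exact ⟨⟨q, h1, h2, h3, h4, h5⟩⟩
  · rintro ⟨Q⟩
    exact ⟨Q.q, Q.add1, Q.add2, Q.lsmul, Q.bal, Q.ne⟩


/-- **The bijection induced by a weak Morita pair** between isomorphism classes
of irreducible `B`-modules `V` with `J_B V ≠ 0` and irreducible `A`-modules `W`
with `J_A W ≠ 0`: the correspondence `V ↦ D_M^N V` (encoded by `Linked`) is
total and injective on isomorphism classes in both directions, and its inverse
correspondence is `W ↦ D_N^M W` (encoded by `CoLinked`). -/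
theorem weakMoritaPair_bijection
    (A B M N : Type)
    [Ring A] [Ring B]
    [AddCommGroup M] [Module A M] [Module Bᵐᵒᵖ M] [SMulCommClass A Bᵐᵒᵖ M]
    [AddCommGroup N] [Module B N] [Module Aᵐᵒᵖ N] [SMulCommClass B Aᵐᵒᵖ N]
    (φA : M → N → A) (φB : N → M → B)
    (hφAadd1 : ∀ m m' nn, φA (m + m') nn = φA m nn + φA m' nn)
    (hφAadd2 : ∀ m nn nn', φA m (nn + nn') = φA m nn + φA m nn')
    (hφAl : ∀ (a : A) m nn, φA (a • m) nn = a * φA m nn)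
    (hφAr : ∀ (a : A) m nn, φA m (op a • nn) = φA m nn * a)
    (hφAbal : ∀ (b : B) m nn, φA (op b • m) nn = φA m (b • nn))
    (hφBadd1 : ∀ nn nn' m, φB (nn + nn') m = φB nn m + φB nn' m)
    (hφBadd2 : ∀ nn m m', φB nn (m + m') = φB nn m + φB nn m')
    (hφBl : ∀ (b : B) nn m, φB (b • nn) m = b * φB nn m)
    (hφBr : ∀ (b : B) nn m, φB nn (op b • m) = φB nn m * b)
    (hφBbal : ∀ (a : A) nn m, φB (op a • nn) m = φB nn (a • m))
    (hc1 : ∀ m nn m', φA m nn • m' = op (φB nn m') • m)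
    (hc2 : ∀ nn m nn', φB nn m • nn' = op (φA m nn') • nn) :
    -- existence: every irreducible `B`-module `V` with `J_B V ≠ 0` is linked
    -- to some irreducible `A`-module `W = D_M^N V` with `J_A W ≠ 0`
    (∀ (V : ModuleOver B), IsSimpleModule B V.carrier →
      (∃ (nn : N) (m : M) (v : V.carrier), φB nn m • v ≠ 0) →
      ∃ (W : ModuleOver A), IsSimpleModule A W.carrier ∧
        (∃ (m : M) (nn : N) (w : W.carrier), φA m nn • w ≠ 0) ∧
        Linked A B M V.carrier W.carrier) ∧
    -- existence in the other direction, via `W ↦ D_N^M W`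
    (∀ (W : ModuleOver A), IsSimpleModule A W.carrier →
      (∃ (m : M) (nn : N) (w : W.carrier), φA m nn • w ≠ 0) →
      ∃ (V : ModuleOver B), IsSimpleModule B V.carrier ∧
        (∃ (nn : N) (m : M) (v : V.carrier), φB nn m • v ≠ 0) ∧
        Linked A B M V.carrier W.carrier) ∧
    -- the correspondence is well defined and injective on isomorphism classes
    (∀ (V V' : ModuleOver B) (W W' : ModuleOver A),
      IsSimpleModule B V.carrier → IsSimpleModule B V'.carrier →
      IsSimpleModule A W.carrier → IsSimpleModule A W'.carrier →
      (∃ (nn : N) (m : M) (v : V.carrier), φB nn m • v ≠ 0) →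
      (∃ (nn : N) (m : M) (v : V'.carrier), φB nn m • v ≠ 0) →
      Linked A B M V.carrier W.carrier → Linked A B M V'.carrier W'.carrier →
      (Nonempty (V.carrier ≃ₗ[B] V'.carrier) ↔
        Nonempty (W.carrier ≃ₗ[A] W'.carrier))) ∧
    -- the inverse correspondence is `D_N^M`
    (∀ (V : ModuleOver B) (W : ModuleOver A),
      IsSimpleModule B V.carrier → IsSimpleModule A W.carrier →
      (∃ (nn : N) (m : M) (v : V.carrier), φB nn m • v ≠ 0) →
      (∃ (m : M) (nn : N) (w : W.carrier), φA m nn • w ≠ 0) →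
      (Linked A B M V.carrier W.carrier ↔ CoLinked A B N W.carrier V.carrier)) := by
  obtain ⟨D, rfl, rfl⟩ : ∃ D : MoritaData A B M N, φA = D.φA ∧ φB = D.φB :=
    ⟨⟨φA, φB, hφAadd1, hφAadd2, hφAl, hφAr, hφAbal, hφBadd1, hφBadd2, hφBl,
      hφBr, hφBbal, hc1, hc2⟩, rfl, rfl⟩
  refine ⟨?_, ?_, ?_, ?_⟩
  · -- Part 1
    intro V hV hJB
    obtain ⟨Wo, hWsimp, ⟨Q⟩⟩ := exists_linked D V.carrier hV hJB
    exact ⟨Wo, hWsimp, jA_ne D hV Q hJB, linked_def.mpr ⟨Q⟩⟩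
  · -- Part 2
    intro W hW hJA
    obtain ⟨Vo, hVsimp, ⟨Qs⟩⟩ := exists_linked D.swap W.carrier hW hJA
    have hJB : ∃ (nn : N) (m : M) (v : Vo.carrier), D.φB nn m • v ≠ 0 :=
      jA_ne D.swap hW Qs hJA
    obtain ⟨P, h1, h2, h3, h4, h5, h6⟩ := exists_colink D.swap hW hVsimp Qs
    have h6' : ∀ (nn : N) (m : M) (v : Vo.carrier), Qs.q nn (P m v) = D.φB nn m • v := h6
    refine ⟨Vo, hVsimp, hJB, linked_def.mpr ⟨⟨P, h1, h2, h3, h4, ?_⟩⟩⟩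
    intro hzero
    obtain ⟨nn, m, v, hnz⟩ := hJB
    apply hnz
    have h0 : P m v = 0 := congrFun (congrFun hzero m) v
    rw [← h6' nn m v, h0, Qs.zero2]
  · -- Part 3
    intro V V' W W' hV hV' hW hW' hJB hJB' hL hL'
    obtain ⟨Q⟩ := linked_def.mp hL
    obtain ⟨Q'⟩ := linked_def.mp hL'
    constructor
    · rintro ⟨e⟩
      refine link_unique D hV' hW hW'
        ⟨fun m v' => Q.q m (e.symm v'), ?_, ?_, ?_, ?_, ?_⟩ Q' hJB'
      · intro m m' v; exact Q.add1 m m' _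
      · intro m v v'
        show Q.q m (e.symm (v + v')) = Q.q m (e.symm v) + Q.q m (e.symm v')
        rw [map_add, Q.add2]
      · intro a m v; exact Q.lsmul a m _
      · intro b m v
        show Q.q (op b • m) (e.symm v) = Q.q m (e.symm (b • v))
        rw [Q.bal, map_smul]
      · intro h
        obtain ⟨m, v, hmv⟩ := Q.exists_ne'
        apply hmv
        simpa using congrFun (congrFun h m) (e v)
    · rintro ⟨e⟩
      have hJA : ∃ (m : M) (nn : N) (w : W.carrier), D.φA m nn • w ≠ 0 :=
        jA_ne D hV Q hJB
      have hJA' : ∃ (m : M) (nn : N) (w : W'.carrier), D.φA m nn • w ≠ 0 :=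
        jA_ne D hV' Q' hJB'
      obtain ⟨P, Pa1, Pa2, Pl, Pb, PofQ, QofP⟩ := exists_colink D hV hW Q
      obtain ⟨P', P'a1, P'a2, P'l, P'b, P'ofQ, Q'ofP⟩ := exists_colink D hV' hW' Q'
      have PQ : LinkMap B A N W.carrier V.carrier := by
        refine ⟨P, Pa1, Pa2, Pl, Pb, ?_⟩
        intro h
        obtain ⟨m, nn, w, hnz⟩ := hJA
        apply hnz
        have h0 : P nn w = 0 := congrFun (congrFun h nn) w
        rw [← QofP m nn w, h0, Q.zero2]
      have PQ' : LinkMap B A N W.carrier V'.carrier := by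
        refine ⟨fun n w => P' n (e w), ?_, ?_, ?_, ?_, ?_⟩
        · intro n n' w; exact P'a1 n n' (e w)
        · intro n w w'
          show P' n (e (w + w')) = P' n (e w) + P' n (e w')
          rw [map_add, P'a2]
        · intro b n w; exact P'l b n (e w)
        · intro a n w
          show P' (op a • n) (e w) = P' n (e (a • w))
          rw [P'b, map_smul]
        · intro h
          obtain ⟨m, nn, w', hnz⟩ := hJA'
          apply hnz
          have h0 : P' nn (e (e.symm w')) = 0 := congrFun (congrFun h nn) (e.symm w')
          rw [e.apply_symm_apply] at h0
          rw [← Q'ofP m nn w', h0, Q'.zero2]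
      exact link_unique D.swap hW hV hV' PQ PQ' hJA
  · -- Part 4
    intro V W hV hW hJB hJA
    constructor
    · intro hL
      obtain ⟨Q⟩ := linked_def.mp hL
      obtain ⟨P, h1, h2, h3, h4, h5, h6⟩ := exists_colink D hV hW Q
      refine colinked_def.mpr ⟨⟨P, h1, h2, h3, h4, ?_⟩⟩
      intro hzero
      obtain ⟨m, nn, w, hnz⟩ := hJA
      apply hnz
      have h0 : P nn w = 0 := congrFun (congrFun hzero nn) w
      rw [← h6 m nn w, h0, Q.zero2]
    · intro hC
      obtain ⟨Qs⟩ := colinked_def.mp hC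
      obtain ⟨P, h1, h2, h3, h4, h5, h6⟩ := exists_colink D.swap hW hV Qs
      have h6' : ∀ (nn : N) (m : M) (v : V.carrier), Qs.q nn (P m v) = D.φB nn m • v := h6
      refine linked_def.mpr ⟨⟨P, h1, h2, h3, h4, ?_⟩⟩
      intro hzero
      obtain ⟨nn, m, v, hnz⟩ := hJB
      apply hnz
      have h0 : P m v = 0 := congrFun (congrFun hzero m) v
      rw [← h6' nn m v, h0, Qs.zero2]
end Aux
end
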